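/- There exists C₁ > 0, independent of a, such that for every a > 0, every x ∈ ℝ^N ∖ Λ and every (u,v) ∈ ℝ²: |u H_u(x,u,v) + v H_v(x,u,v)| ≤ C₁ A (u² + v²). -/

import Mathlib

open MeasureTheory Real Set Filter

noncomputable section

abbrev Euc (N : ℕ) := EuclideanSpace ℝ (Fin N)

/-- Partial derivative of a two-variable real function in the first variable. -/
def pdU (f : ℝ → ℝ → ℝ) (u v : ℝ) : ℝ := deriv (fun t => f t v) u

/-- Partial derivative of a two-variable real function in the second variable. -/
def pdV (f : ℝ → ℝ → ℝ) (u v : ℝ) : ℝ := deriv (fun t => f u t) v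

/-- Integrand of the Gagliardo seminorm. -/
def gagKer (N : ℕ) (s : ℝ) (u : Euc N → ℝ) (z : Euc N × Euc N) : ℝ :=
  (u z.1 - u z.2) ^ 2 / ‖z.1 - z.2‖ ^ ((N : ℝ) + 2 * s)

/-- Squared Gagliardo seminorm `[u]²`. -/
def gagSq (N : ℕ) (s : ℝ) (u : Euc N → ℝ) : ℝ := ∫ z, gagKer N s u z

/-- Membership in the fractional Sobolev space `H^s(ℝ^N)`. -/
def MemHs (N : ℕ) (s : ℝ) (u : Euc N → ℝ) : Prop :=
  MemLp u 2 (volume : Measure (Euc N)) ∧ Integrable (gagKer N s u)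

/-- The nonlinearity `Q` together with assumptions (Q1)-(Q6); `Q` is `C²` on the closed
first quadrant and extended by `0` outside of it.  Its partial derivatives are `pdU Q`,
`pdV Q`. -/
structure QSetup (p : ℝ) : Type where
  Q : ℝ → ℝ → ℝ
  smooth : ContDiffOn ℝ 2 (fun z : ℝ × ℝ => Q z.1 z.2) (Ici 0 ×ˢ Ici 0)
  ext_zero : ∀ u v : ℝ, u ≤ 0 ∨ v ≤ 0 → Q u v = 0
  q1 : ∀ t : ℝ, 0 < t → ∀ u v : ℝ, 0 ≤ u → 0 ≤ v → Q (t * u) (t * v) = t ^ p * Q u v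
  q2 : ∃ C : ℝ, 0 < C ∧ ∀ u v : ℝ, 0 ≤ u → 0 ≤ v →
        |pdU Q u v| + |pdV Q u v| ≤ C * (u ^ (p - 1) + v ^ (p - 1))
  q3 : pdU Q 0 1 = 0 ∧ pdV Q 1 0 = 0
  q4 : pdU Q 1 0 = 0 ∧ pdV Q 0 1 = 0
  q5 : ∀ u v : ℝ, 0 < u → 0 < v → 0 < Q u v
  q6 : ∀ u v : ℝ, 0 ≤ u → 0 ≤ v → 0 ≤ pdU Q u v ∧ 0 ≤ pdV Q u v

/-- The potentials `V`, `W`, the set `Λ`, the point `x₀` and `ρ₀`, with (H1)-(H3). -/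
structure PotSetup (N : ℕ) : Type where
  V : Euc N → ℝ
  W : Euc N → ℝ
  Λ : Set (Euc N)
  x₀ : Euc N
  ρ₀ : ℝ
  contV : Continuous V
  contW : Continuous W
  openΛ : IsOpen Λ
  bddΛ : Bornology.IsBounded Λ
  x₀mem : x₀ ∈ Λ
  ρ₀pos : 0 < ρ₀
  h1 : ∀ x ∈ frontier Λ, ρ₀ ≤ V x ∧ ρ₀ ≤ W x
  h2 : V x₀ < ρ₀ ∧ W x₀ < ρ₀
  h3 : (∀ x, V x₀ ≤ V x) ∧ (∀ x, W x₀ ≤ W x) ∧ 0 < V x₀ ∧ 0 < W x₀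

/-- `‖(u,v)‖²_ξ` for the autonomous problem with frozen potentials `V(ξ)`, `W(ξ)`. -/
def normSqXi {N : ℕ} (s : ℝ) (P : PotSetup N) (ξ : Euc N) (u v : Euc N → ℝ) : ℝ :=
  gagSq N s u + gagSq N s v + ∫ x, (P.V ξ * u x ^ 2 + P.W ξ * v x ^ 2)

/-- The autonomous energy functional `J_ξ`. -/
def Jxi {N : ℕ} (s : ℝ) {p : ℝ} (QS : QSetup p) (P : PotSetup N) (ξ : Euc N)
    (u v : Euc N → ℝ) : ℝ :=
  (1 / 2) * normSqXi s P ξ u v - ∫ x, QS.Q (u x) (v x)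

/-- The Nehari manifold `N_ξ` of the autonomous functional `J_ξ`. -/
def NehariXi {N : ℕ} (s : ℝ) {p : ℝ} (QS : QSetup p) (P : PotSetup N) (ξ : Euc N) :
    Set ((Euc N → ℝ) × (Euc N → ℝ)) :=
  {w | MemHs N s w.1 ∧ MemHs N s w.2 ∧ w ≠ (0, 0) ∧
    normSqXi s P ξ w.1 w.2 =
      ∫ x, (w.1 x * pdU QS.Q (w.1 x) (w.2 x) + w.2 x * pdV QS.Q (w.1 x) (w.2 x))}

/-- `C(ξ) = inf_{(u,v) ∈ N_ξ} J_ξ(u,v)`. -/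
def Cmin {N : ℕ} (s : ℝ) {p : ℝ} (QS : QSetup p) (P : PotSetup N) (ξ : Euc N) : ℝ :=
  sInf ((fun w : (Euc N → ℝ) × (Euc N → ℝ) => Jxi s QS P ξ w.1 w.2) '' NehariXi s QS P ξ)

/-- The cut-off function `η` used in the penalization, for a given `a > 0`. -/
structure EtaSetup (a cη : ℝ) : Type where
  η : ℝ → ℝ
  smooth : ContDiff ℝ 2 η
  anti : Antitone η
  mem01 : ∀ t, η t ∈ Icc (0 : ℝ) 1
  eq_one : ∀ t, t ≤ a → η t = 1
  eq_zero : ∀ t, 5 * a ≤ t → η t = 0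
  bd1 : ∀ t, |deriv η t| ≤ cη / a
  bd2 : ∀ t, |deriv (deriv η) t| ≤ cη / a ^ 2

/-- `A = max { Q(u,v)/(u²+v²) : a ≤ √(u²+v²) ≤ 5a }`. -/
def Aconst {p : ℝ} (QS : QSetup p) (a : ℝ) : ℝ :=
  sSup ((fun z : ℝ × ℝ => QS.Q z.1 z.2 / (z.1 ^ 2 + z.2 ^ 2)) ''
    {z : ℝ × ℝ | a ≤ Real.sqrt (z.1 ^ 2 + z.2 ^ 2) ∧ Real.sqrt (z.1 ^ 2 + z.2 ^ 2) ≤ 5 * a})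

/-- The penalized nonlinearity `Q̂`. -/
def Qhat {p : ℝ} (QS : QSetup p) (η : ℝ → ℝ) (A u v : ℝ) : ℝ :=
  η (Real.sqrt (u ^ 2 + v ^ 2)) * QS.Q u v +
    (1 - η (Real.sqrt (u ^ 2 + v ^ 2))) * (A * (u ^ 2 + v ^ 2))

/-- The penalized function `H(x,u,v) = χ_Λ(x) Q(u,v) + (1-χ_Λ(x)) Q̂(u,v)`. -/
def Hpen {N : ℕ} {p : ℝ} (QS : QSetup p) (η : ℝ → ℝ) (A : ℝ) (Λ : Set (Euc N))
    (x : Euc N) (u v : ℝ) : ℝ :=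
  Λ.indicator (fun _ => (1 : ℝ)) x * QS.Q u v +
    (1 - Λ.indicator (fun _ => (1 : ℝ)) x) * Qhat QS η A u v

/-- `H_u`. -/
def HpenU {N : ℕ} {p : ℝ} (QS : QSetup p) (η : ℝ → ℝ) (A : ℝ) (Λ : Set (Euc N))
    (x : Euc N) (u v : ℝ) : ℝ := pdU (Hpen QS η A Λ x) u v

/-- `H_v`. -/
def HpenV {N : ℕ} {p : ℝ} (QS : QSetup p) (η : ℝ → ℝ) (A : ℝ) (Λ : Set (Euc N))
    (x : Euc N) (u v : ℝ) : ℝ := pdV (Hpen QS η A Λ x) u v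

/-- `H_uu`. -/
def HpenUU {N : ℕ} {p : ℝ} (QS : QSetup p) (η : ℝ → ℝ) (A : ℝ) (Λ : Set (Euc N))
    (x : Euc N) (u v : ℝ) : ℝ := pdU (HpenU QS η A Λ x) u v

/-- `H_uv`. -/
def HpenUV {N : ℕ} {p : ℝ} (QS : QSetup p) (η : ℝ → ℝ) (A : ℝ) (Λ : Set (Euc N))
    (x : Euc N) (u v : ℝ) : ℝ := pdV (HpenU QS η A Λ x) u v

/-- `H_vv`. -/
def HpenVV {N : ℕ} {p : ℝ} (QS : QSetup p) (η : ℝ → ℝ) (A : ℝ) (Λ : Set (Euc N))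
    (x : Euc N) (u v : ℝ) : ℝ := pdV (HpenV QS η A Λ x) u v

/-- `‖(u,v)‖²_ε`. -/
def normSqE {N : ℕ} (s : ℝ) (P : PotSetup N) (ε : ℝ) (u v : Euc N → ℝ) : ℝ :=
  gagSq N s u + gagSq N s v + ∫ x, (P.V (ε • x) * u x ^ 2 + P.W (ε • x) * v x ^ 2)

/-- Membership in the space `X_ε`. -/
def MemXe {N : ℕ} (s : ℝ) (P : PotSetup N) (ε : ℝ) (u v : Euc N → ℝ) : Prop :=
  MemHs N s u ∧ MemHs N s v ∧
    Integrable (fun x => P.V (ε • x) * u x ^ 2 + P.W (ε • x) * v x ^ 2)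

/-- The penalized energy functional `J_ε`. -/
def Je {N : ℕ} (s : ℝ) {p : ℝ} (QS : QSetup p) (η : ℝ → ℝ) (A : ℝ) (P : PotSetup N)
    (ε : ℝ) (u v : Euc N → ℝ) : ℝ :=
  (1 / 2) * normSqE s P ε u v - ∫ x, Hpen QS η A P.Λ (ε • x) (u x) (v x)

/-- The pairing `⟨J'_ε(u,v),(φ,ψ)⟩`. -/
def pairJe {N : ℕ} (s : ℝ) {p : ℝ} (QS : QSetup p) (η : ℝ → ℝ) (A : ℝ) (P : PotSetup N)
    (ε : ℝ) (u v φ ψ : Euc N → ℝ) : ℝ :=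
  (∫ z : Euc N × Euc N, (u z.1 - u z.2) * (φ z.1 - φ z.2) / ‖z.1 - z.2‖ ^ ((N : ℝ) + 2 * s)) +
  (∫ z : Euc N × Euc N, (v z.1 - v z.2) * (ψ z.1 - ψ z.2) / ‖z.1 - z.2‖ ^ ((N : ℝ) + 2 * s)) +
  (∫ x, (P.V (ε • x) * u x * φ x + P.W (ε • x) * v x * ψ x)) -
  (∫ x, (φ x * HpenU QS η A P.Λ (ε • x) (u x) (v x) +
         ψ x * HpenV QS η A P.Λ (ε • x) (u x) (v x)))

/-- The Nehari manifold `N_ε` of the penalized functional `J_ε`. -/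
def NehariE {N : ℕ} (s : ℝ) {p : ℝ} (QS : QSetup p) (η : ℝ → ℝ) (A : ℝ) (P : PotSetup N)
    (ε : ℝ) : Set ((Euc N → ℝ) × (Euc N → ℝ)) :=
  {w | MemXe s P ε w.1 w.2 ∧ w ≠ (0, 0) ∧
    normSqE s P ε w.1 w.2 =
      ∫ x, (w.1 x * HpenU QS η A P.Λ (ε • x) (w.1 x) (w.2 x) +
            w.2 x * HpenV QS η A P.Λ (ε • x) (w.1 x) (w.2 x))}

end

/-! Outside `Λ` we have `H = Q̂`, and `u ∂_u + v ∂_v` is the radial derivative `r ∂_r`. Euler's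
identity for the `p`-homogeneous `Q` gives
`r ∂_r Q̂ = r η'(r) (Q - A r²) + p η(r) Q + 2 (1 - η(r)) A r²`.
Homogeneity and `p > 2` give `0 ≤ Q ≤ A r²` on the whole ball `r ≤ 5a`, not only on the annulus
defining `A`; there `r |η'(r)| ≤ 5 c_η`, while `η = η' = 0` for `r > 5a`. Hence
`C₁ = 5 c_η + p + 2` works. On the axes `Q̂` need not be differentiable, but `Q` vanishes along
the line in which the surviving partial derivative is taken, so `Q̂` can be replaced there by its
smooth `Q = 0` version. -/

open Function

theorem mul_pdU_add_mul_pdV_eq_deriv {f : ℝ → ℝ → ℝ} {u v : ℝ}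
    (hf : DifferentiableAt ℝ (uncurry f) (u, v)) :
    u * pdU f u v + v * pdV f u v = deriv (fun t => f (t * u) (t * v)) 1 := by
  set L := fderiv ℝ (uncurry f) (u, v)
  have hL : HasFDerivAt (uncurry f) L (u, v) := hf.hasFDerivAt
  have hU : pdU f u v = L (1, 0) :=
    (hL.comp_hasDerivAt (f := fun t => (t, v)) u
      ((hasDerivAt_id u).prodMk (hasDerivAt_const u v))).deriv
  have hV : pdV f u v = L (0, 1) :=
    (hL.comp_hasDerivAt (f := fun t => (u, t)) v
      ((hasDerivAt_const v u).prodMk (hasDerivAt_id v))).deriv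
  have hray : HasDerivAt (fun t : ℝ => (t * u, t * v)) (u, v) 1 := by
    simpa using ((hasDerivAt_id (1 : ℝ)).mul_const u).prodMk ((hasDerivAt_id (1 : ℝ)).mul_const v)
  have hcomp : HasDerivAt (fun t => f (t * u) (t * v)) (L (u, v)) 1 :=
    hL.comp_hasDerivAt_of_eq 1 hray (by simp)
  rw [hcomp.deriv, hU, hV]
  have : ((u, v) : ℝ × ℝ) = u • ((1 : ℝ), (0 : ℝ)) + v • ((0 : ℝ), (1 : ℝ)) := by simp
  rw [this, map_add, map_smul, map_smul, smul_eq_mul, smul_eq_mul]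

theorem differentiable_comp_sqrt {η : ℝ → ℝ} (hη : Differentiable ℝ η)
    (hη0 : η =ᶠ[nhds 0] fun _ => η 0) : Differentiable ℝ (fun s => η √s) := by
  intro s
  rcases lt_or_ge 0 s with hs | hs
  · exact (hη _).comp s (differentiableAt_id.sqrt hs.ne')
  · have hsqrt : Tendsto Real.sqrt (nhds s) (nhds 0) := by
      simpa [Real.sqrt_eq_zero'.mpr hs] using Real.continuous_sqrt.tendsto s
    exact (differentiableAt_const (η 0)).congr_of_eventuallyEq (hsqrt.eventually hη0)

noncomputable def penalize (Q : ℝ → ℝ → ℝ) (η : ℝ → ℝ) (A u v : ℝ) : ℝ :=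
  η √(u ^ 2 + v ^ 2) * Q u v + (1 - η √(u ^ 2 + v ^ 2)) * (A * (u ^ 2 + v ^ 2))

theorem Qhat_eq_penalize {p : ℝ} (QS : QSetup p) (η : ℝ → ℝ) (A : ℝ) :
    Qhat QS η A = penalize QS.Q η A := rfl

theorem differentiableAt_uncurry_penalize {Q : ℝ → ℝ → ℝ} {η : ℝ → ℝ} (A : ℝ) {u v : ℝ}
    (hη : Differentiable ℝ η) (hη0 : η =ᶠ[nhds 0] fun _ => η 0)
    (hQ : DifferentiableAt ℝ (uncurry Q) (u, v)) :
    DifferentiableAt ℝ (uncurry (penalize Q η A)) (u, v) := by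
  have hr : Differentiable ℝ (fun z : ℝ × ℝ => η √(z.1 ^ 2 + z.2 ^ 2)) :=
    (differentiable_comp_sqrt hη hη0).comp (by fun_prop)
  exact ((hr _).mul hQ).add (((differentiableAt_const 1).sub (hr _)).mul (by fun_prop))

theorem sqrt_mul_sq_add_mul_sq {t : ℝ} (ht : 0 ≤ t) (u v : ℝ) :
    √((t * u) ^ 2 + (t * v) ^ 2) = t * √(u ^ 2 + v ^ 2) := by
  rw [show (t * u) ^ 2 + (t * v) ^ 2 = t ^ 2 * (u ^ 2 + v ^ 2) by ring,
    Real.sqrt_mul (sq_nonneg t), Real.sqrt_sq ht]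

theorem hasDerivAt_penalize_ray {Q : ℝ → ℝ → ℝ} {η : ℝ → ℝ} {p A u v : ℝ}
    (hQ : ∀ t, 0 < t → Q (t * u) (t * v) = t ^ p * Q u v)
    (hη : DifferentiableAt ℝ η √(u ^ 2 + v ^ 2)) :
    HasDerivAt (fun t => penalize Q η A (t * u) (t * v))
      (deriv η √(u ^ 2 + v ^ 2) * √(u ^ 2 + v ^ 2) * (Q u v - A * (u ^ 2 + v ^ 2)) +
        η √(u ^ 2 + v ^ 2) * (p * Q u v) +
        (1 - η √(u ^ 2 + v ^ 2)) * (2 * A * (u ^ 2 + v ^ 2))) 1 := by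
  set ρ := √(u ^ 2 + v ^ 2)
  have hηρ : HasDerivAt (fun t => η (t * ρ)) (deriv η ρ * ρ) 1 :=
    hη.hasDerivAt.comp_of_eq 1 (by simpa using (hasDerivAt_id (1 : ℝ)).mul_const ρ)
      (one_mul ρ).symm
  have hpow : HasDerivAt (fun t : ℝ => t ^ p) p 1 := by
    simpa using Real.hasDerivAt_rpow_const (x := 1) (p := p) (Or.inl one_ne_zero)
  have hsq : HasDerivAt (fun t : ℝ => t ^ 2) 2 1 := by simpa using hasDerivAt_pow 2 (1 : ℝ)
  have hg := (hηρ.mul (hpow.mul_const (Q u v))).add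
    ((hηρ.const_sub 1).mul ((hsq.mul_const (u ^ 2 + v ^ 2)).const_mul A))
  refine (hg.congr_of_eventuallyEq ?_).congr_deriv ?_
  · filter_upwards [lt_mem_nhds one_pos] with t ht
    simp only [penalize, Pi.add_apply, Pi.mul_apply, sqrt_mul_sq_add_mul_sq ht.le, hQ t ht]
    ring
  · simp only [one_mul, one_pow, Real.one_rpow]
    ring

namespace EtaSetup

variable {a cη : ℝ}

theorem eventuallyEq_nhds_zero (E : EtaSetup a cη) (ha : 0 < a) :
    E.η =ᶠ[nhds 0] fun _ => E.η 0 := by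
  filter_upwards [gt_mem_nhds ha] with t ht
  rw [E.eq_one t ht.le, E.eq_one 0 ha.le]

theorem deriv_eq_zero_of_lt (E : EtaSetup a cη) {t : ℝ} (ht : 5 * a < t) : deriv E.η t = 0 := by
  have h : E.η =ᶠ[nhds t] fun _ => 0 := by
    filter_upwards [lt_mem_nhds ht] with s hs using E.eq_zero s hs.le
  rw [h.deriv_eq, deriv_const]

theorem const_nonneg (E : EtaSetup a cη) (ha : 0 < a) : 0 ≤ cη := by
  have h := mul_nonneg ((abs_nonneg _).trans (E.bd1 0)) ha.le
  rwa [div_mul_cancel₀ _ ha.ne'] at h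

theorem abs_radial_le (E : EtaSetup a cη) (ha : 0 < a) {p A q ρ : ℝ} (hp : 0 ≤ p) (hA : 0 ≤ A)
    (hρ : 0 ≤ ρ) (hq : ρ ≤ 5 * a → 0 ≤ q ∧ q ≤ A * ρ ^ 2) :
    |deriv E.η ρ * ρ * (q - A * ρ ^ 2) + E.η ρ * (p * q) + (1 - E.η ρ) * (2 * A * ρ ^ 2)| ≤
      (5 * cη + p + 2) * A * ρ ^ 2 := by
  have hcη := E.const_nonneg ha
  have hAρ : 0 ≤ A * ρ ^ 2 := by positivity
  rcases le_or_gt ρ (5 * a) with hρa | hρa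
  · obtain ⟨hq0, hqA⟩ := hq hρa
    obtain ⟨hη0, hη1⟩ := E.mem01 ρ
    have hslope : |deriv E.η ρ| * ρ ≤ 5 * cη :=
      calc |deriv E.η ρ| * ρ ≤ cη / a * (5 * a) :=
            mul_le_mul (E.bd1 ρ) hρa hρ (by positivity)
        _ = 5 * cη := by field_simp
    have h1 : |deriv E.η ρ * ρ * (q - A * ρ ^ 2)| ≤ 5 * cη * (A * ρ ^ 2) := by
      rw [abs_mul, abs_mul, abs_of_nonneg hρ]
      exact mul_le_mul hslope (abs_le.mpr ⟨by linarith, by linarith⟩) (abs_nonneg _)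
        (by positivity)
    have h2 : |E.η ρ * (p * q)| ≤ p * (A * ρ ^ 2) := by
      rw [abs_of_nonneg (by positivity)]
      nlinarith [mul_nonneg hp hq0, mul_le_mul_of_nonneg_left hqA hp]
    have h3 : |(1 - E.η ρ) * (2 * A * ρ ^ 2)| ≤ 2 * (A * ρ ^ 2) := by
      rw [abs_of_nonneg (mul_nonneg (by linarith) (by positivity))]
      nlinarith
    calc _ ≤ _ := abs_add_three _ _ _
      _ ≤ 5 * cη * (A * ρ ^ 2) + p * (A * ρ ^ 2) + 2 * (A * ρ ^ 2) := by gcongr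
      _ = _ := by ring
  · rw [E.deriv_eq_zero_of_lt hρa, E.eq_zero ρ hρa.le, zero_mul, zero_mul, zero_add, zero_mul,
      zero_add, sub_zero, one_mul, abs_of_nonneg (by positivity)]
    nlinarith

end EtaSetup

theorem abs_mul_pdU_add_mul_pdV_penalize_le {Q : ℝ → ℝ → ℝ} {p a cη A u v : ℝ}
    (E : EtaSetup a cη) (ha : 0 < a) (hp : 0 ≤ p) (hA : 0 ≤ A)
    (hhom : ∀ t, 0 < t → Q (t * u) (t * v) = t ^ p * Q u v)
    (hQ : √(u ^ 2 + v ^ 2) ≤ 5 * a → 0 ≤ Q u v ∧ Q u v ≤ A * (u ^ 2 + v ^ 2))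
    (hd : DifferentiableAt ℝ (uncurry Q) (u, v)) :
    |u * pdU (penalize Q E.η A) u v + v * pdV (penalize Q E.η A) u v| ≤
      (5 * cη + p + 2) * A * (u ^ 2 + v ^ 2) := by
  have hη : Differentiable ℝ E.η := E.smooth.differentiable two_ne_zero
  have hsq : √(u ^ 2 + v ^ 2) ^ 2 = u ^ 2 + v ^ 2 := Real.sq_sqrt (by positivity)
  rw [mul_pdU_add_mul_pdV_eq_deriv
      (differentiableAt_uncurry_penalize A hη (E.eventuallyEq_nhds_zero ha) hd),
    (hasDerivAt_penalize_ray hhom (hη _)).deriv]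
  have h := E.abs_radial_le ha hp hA (Real.sqrt_nonneg _) (by rwa [hsq])
  rwa [hsq] at h

theorem mul_pdU_add_mul_pdV_penalize_of_axis {Q : ℝ → ℝ → ℝ} {η : ℝ → ℝ} {A u v : ℝ}
    (hQ : ∀ u v, u ≤ 0 ∨ v ≤ 0 → Q u v = 0) (h : u = 0 ∨ v = 0) :
    u * pdU (penalize Q η A) u v + v * pdV (penalize Q η A) u v =
      u * pdU (penalize 0 η A) u v + v * pdV (penalize 0 η A) u v := by
  rcases h with rfl | rfl
  · have hline : (fun t => penalize Q η A 0 t) = fun t => penalize 0 η A 0 t := by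
      funext t
      simp [penalize, hQ 0 t (Or.inl le_rfl)]
    simp only [pdV, hline, zero_mul]
  · have hline : (fun t => penalize Q η A t 0) = fun t => penalize 0 η A t 0 := by
      funext t
      simp [penalize, hQ t 0 (Or.inr le_rfl)]
    simp only [pdU, hline, zero_mul]

theorem le_mul_sq_of_homogeneous {Q : ℝ → ℝ → ℝ} {p a A : ℝ} (hp : 2 ≤ p) (ha : 0 < a)
    (hA : 0 ≤ A) (hhom : ∀ t, 0 < t → ∀ u v, Q (t * u) (t * v) = t ^ p * Q u v)
    (hsphere : ∀ u v, √(u ^ 2 + v ^ 2) = a → Q u v ≤ A * (u ^ 2 + v ^ 2))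
    {u v : ℝ} (hr : √(u ^ 2 + v ^ 2) ≤ a) : Q u v ≤ A * (u ^ 2 + v ^ 2) := by
  rcases (Real.sqrt_nonneg (u ^ 2 + v ^ 2)).eq_or_lt with hρ | hρ
  · obtain ⟨rfl, rfl⟩ : u = 0 ∧ v = 0 := by
      have := Real.sqrt_eq_zero'.mp hρ.symm
      constructor <;> nlinarith [sq_nonneg u, sq_nonneg v]
    have h2 : Q 0 0 = 2 ^ p * Q 0 0 := by simpa using hhom 2 two_pos 0 0
    have h2p : 1 < (2 : ℝ) ^ p := Real.one_lt_rpow one_lt_two (by linarith)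
    have h0 : (2 ^ p - 1) * Q 0 0 = 0 := by linarith
    simp [(mul_eq_zero.mp h0).resolve_left (by linarith)]
  · set t := √(u ^ 2 + v ^ 2) / a
    have ht : 0 < t := div_pos hρ ha
    have ht1 : t ≤ 1 := (div_le_one ha).mpr hr
    have hon : √((t⁻¹ * u) ^ 2 + (t⁻¹ * v) ^ 2) = a := by
      rw [sqrt_mul_sq_add_mul_sq (inv_nonneg.mpr ht.le), inv_mul_eq_iff_eq_mul₀ ht.ne']
      exact (div_mul_cancel₀ _ ha.ne').symm
    have hscale := hhom t ht (t⁻¹ * u) (t⁻¹ * v)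
    rw [mul_inv_cancel_left₀ ht.ne', mul_inv_cancel_left₀ ht.ne'] at hscale
    calc Q u v = t ^ p * Q (t⁻¹ * u) (t⁻¹ * v) := hscale
      _ ≤ t ^ p * (A * ((t⁻¹ * u) ^ 2 + (t⁻¹ * v) ^ 2)) := by gcongr; exact hsphere _ _ hon
      _ ≤ t ^ (2 : ℝ) * (A * ((t⁻¹ * u) ^ 2 + (t⁻¹ * v) ^ 2)) :=
        mul_le_mul_of_nonneg_right (Real.rpow_le_rpow_of_exponent_ge ht ht1 hp) (by positivity)
      _ = A * (u ^ 2 + v ^ 2) := by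
        rw [Real.rpow_two]
        field_simp

namespace QSetup

variable {p : ℝ}

theorem nonneg (QS : QSetup p) (u v : ℝ) : 0 ≤ QS.Q u v := by
  by_cases h : 0 < u ∧ 0 < v
  · exact (QS.q5 u v h.1 h.2).le
  · rw [QS.ext_zero u v ((not_and_or.mp h).imp le_of_not_gt le_of_not_gt)]

theorem homogeneous (QS : QSetup p) {t : ℝ} (ht : 0 < t) (u v : ℝ) :
    QS.Q (t * u) (t * v) = t ^ p * QS.Q u v := by
  by_cases h : 0 ≤ u ∧ 0 ≤ v
  · exact QS.q1 t ht u v h.1 h.2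
  · have hneg : u < 0 ∨ v < 0 := (not_and_or.mp h).imp lt_of_not_ge lt_of_not_ge
    rw [QS.ext_zero u v (hneg.imp le_of_lt le_of_lt),
      QS.ext_zero _ _ (hneg.imp (fun hu => (mul_neg_of_pos_of_neg ht hu).le)
        (fun hv => (mul_neg_of_pos_of_neg ht hv).le)), mul_zero]

theorem differentiableAt (QS : QSetup p) {u v : ℝ} (hu : u ≠ 0) (hv : v ≠ 0) :
    DifferentiableAt ℝ (uncurry QS.Q) (u, v) := by
  by_cases hpos : 0 < u ∧ 0 < v
  · exact (QS.smooth.contDiffAt (prod_mem_nhds (Ici_mem_nhds hpos.1) (Ici_mem_nhds hpos.2))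
      ).differentiableAt two_ne_zero
  · have hneg : ∀ᶠ z in nhds (u, v), z.1 < 0 ∨ z.2 < 0 := by
      rcases (not_and_or.mp hpos).imp (hu.lt_of_le ∘ le_of_not_gt) (hv.lt_of_le ∘ le_of_not_gt)
        with hu | hv
      · exact (continuous_fst.tendsto _ |>.eventually (gt_mem_nhds hu)).mono fun _ => Or.inl
      · exact (continuous_snd.tendsto _ |>.eventually (gt_mem_nhds hv)).mono fun _ => Or.inr
    exact (differentiableAt_const 0).congr_of_eventuallyEq
      (hneg.mono fun z hz => QS.ext_zero z.1 z.2 (hz.imp le_of_lt le_of_lt))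

theorem exists_bound_of_sqrt_le (QS : QSetup p) (R : ℝ) :
    ∃ M, 0 ≤ M ∧ ∀ u v, √(u ^ 2 + v ^ 2) ≤ R → QS.Q u v ≤ M := by
  obtain ⟨M, hM⟩ := (isCompact_Icc.prod isCompact_Icc : IsCompact (Icc 0 R ×ˢ Icc 0 R))
    |>.exists_bound_of_continuousOn
      (QS.smooth.continuousOn.mono (prod_mono Icc_subset_Ici_self Icc_subset_Ici_self))
  refine ⟨max M 0, le_max_right _ _, fun u v hR => ?_⟩
  by_cases h : 0 ≤ u ∧ 0 ≤ v
  · have hu : u ≤ R :=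
      ((le_abs_self u).trans (Real.abs_le_sqrt (le_add_of_nonneg_right (sq_nonneg v)))).trans hR
    have hv : v ≤ R :=
      ((le_abs_self v).trans (Real.abs_le_sqrt (le_add_of_nonneg_left (sq_nonneg u)))).trans hR
    exact le_max_of_le_left ((le_abs_self _).trans (hM (u, v) ⟨⟨h.1, hu⟩, ⟨h.2, hv⟩⟩))
  · rw [QS.ext_zero u v ((not_and_or.mp h).imp (le_of_lt ∘ lt_of_not_ge)
      (le_of_lt ∘ lt_of_not_ge))]
    exact le_max_right _ _

theorem bddAbove_div_annulus (QS : QSetup p) {a : ℝ} (ha : 0 < a) :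
    BddAbove ((fun z : ℝ × ℝ => QS.Q z.1 z.2 / (z.1 ^ 2 + z.2 ^ 2)) ''
      {z : ℝ × ℝ | a ≤ √(z.1 ^ 2 + z.2 ^ 2) ∧ √(z.1 ^ 2 + z.2 ^ 2) ≤ 5 * a}) := by
  obtain ⟨M, hM0, hM⟩ := QS.exists_bound_of_sqrt_le (5 * a)
  refine ⟨M / a ^ 2, ?_⟩
  rintro _ ⟨z, ⟨h1, h2⟩, rfl⟩
  exact div_le_div₀ hM0 (hM _ _ h2) (by positivity) ((Real.le_sqrt' ha).mp h1)

theorem div_le_Aconst (QS : QSetup p) {a u v : ℝ} (ha : 0 < a) (h1 : a ≤ √(u ^ 2 + v ^ 2))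
    (h2 : √(u ^ 2 + v ^ 2) ≤ 5 * a) : QS.Q u v / (u ^ 2 + v ^ 2) ≤ Aconst QS a :=
  le_csSup (QS.bddAbove_div_annulus ha) ⟨(u, v), ⟨h1, h2⟩, rfl⟩

theorem Aconst_nonneg (QS : QSetup p) {a : ℝ} (ha : 0 < a) : 0 ≤ Aconst QS a := by
  have hρ : √(a ^ 2 + 0 ^ 2) = a := by simp [Real.sqrt_sq ha.le]
  have h := QS.div_le_Aconst ha hρ.ge (by linarith)
  rwa [QS.ext_zero a 0 (Or.inr le_rfl), zero_div] at h

theorem le_Aconst_mul (QS : QSetup p) {a u v : ℝ} (ha : 0 < a) (h1 : a ≤ √(u ^ 2 + v ^ 2))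
    (h2 : √(u ^ 2 + v ^ 2) ≤ 5 * a) : QS.Q u v ≤ Aconst QS a * (u ^ 2 + v ^ 2) :=
  (div_le_iff₀ (Real.sqrt_pos.mp (ha.trans_le h1))).mp (QS.div_le_Aconst ha h1 h2)

theorem le_Aconst_mul_of_sqrt_le (QS : QSetup p) (hp : 2 ≤ p) {a u v : ℝ} (ha : 0 < a)
    (h : √(u ^ 2 + v ^ 2) ≤ 5 * a) : QS.Q u v ≤ Aconst QS a * (u ^ 2 + v ^ 2) := by
  rcases le_or_gt a √(u ^ 2 + v ^ 2) with h1 | h1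
  · exact QS.le_Aconst_mul ha h1 h
  · exact le_mul_sq_of_homogeneous hp ha (QS.Aconst_nonneg ha) (fun t ht => QS.homogeneous ht)
      (fun u v hρ => QS.le_Aconst_mul ha hρ.ge (by linarith)) h1.le

end QSetup

theorem Hpen_of_notMem {N : ℕ} {p : ℝ} (QS : QSetup p) (η : ℝ → ℝ) (A : ℝ)
    {Λ : Set (Euc N)} {x : Euc N} (hx : x ∉ Λ) : Hpen QS η A Λ x = Qhat QS η A := by
  funext u v
  simp [Hpen, hx]

theorem stmt5_general {N : ℕ} (s p : ℝ) (hp : 2 < p ∧ p < 2 * (N : ℝ) / ((N : ℝ) - 2 * s))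
    (QS : QSetup p) (Λ : Set (Euc N)) (cη : ℝ) (hcη : 0 < cη) :
    ∃ C₁ : ℝ, 0 < C₁ ∧ ∀ a : ℝ, 0 < a → ∀ E : EtaSetup a cη, ∀ x ∉ Λ, ∀ u v : ℝ,
      |u * HpenU QS E.η (Aconst QS a) Λ x u v +
       v * HpenV QS E.η (Aconst QS a) Λ x u v| ≤
        C₁ * Aconst QS a * (u ^ 2 + v ^ 2) := by
  refine ⟨5 * cη + p + 2, by linarith [hp.1], fun a ha E x hx u v => ?_⟩
  have hA := QS.Aconst_nonneg ha
  have hp0 : 0 ≤ p := by linarith [hp.1]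
  rw [HpenU, HpenV, Hpen_of_notMem QS E.η _ hx, Qhat_eq_penalize]
  by_cases haxis : u = 0 ∨ v = 0
  · rw [mul_pdU_add_mul_pdV_penalize_of_axis QS.ext_zero haxis]
    exact abs_mul_pdU_add_mul_pdV_penalize_le (p := p) E ha hp0 hA (fun _ _ => by simp)
      (fun _ => ⟨le_rfl, by positivity⟩) (differentiableAt_const _)
  · obtain ⟨hu, hv⟩ := not_or.mp haxis
    exact abs_mul_pdU_add_mul_pdV_penalize_le E ha hp0 hA (fun t ht => QS.homogeneous ht u v)
      (fun h => ⟨QS.nonneg u v, QS.le_Aconst_mul_of_sqrt_le hp.1.le ha h⟩)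
      (QS.differentiableAt hu hv)

/-- there is `C₁ > 0` independent of `a` with
`|u H_u(x,u,v) + v H_v(x,u,v)| ≤ C₁ A (u² + v²)` for `x ∉ Λ` and all `(u,v)`. -/
theorem stmt5 {N : ℕ} (s p : ℝ) (hs : 0 < s ∧ s < 1) (hN : 2 * s < (N : ℝ))
    (hp : 2 < p ∧ p < 2 * (N : ℝ) / ((N : ℝ) - 2 * s))
    (QS : QSetup p) (Λ : Set (Euc N)) (hΛo : IsOpen Λ) (hΛb : Bornology.IsBounded Λ)
    (cη : ℝ) (hcη : 0 < cη) :
    ∃ C₁ : ℝ, 0 < C₁ ∧ ∀ a : ℝ, 0 < a → ∀ E : EtaSetup a cη, ∀ x ∉ Λ, ∀ u v : ℝ,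
      |u * HpenU QS E.η (Aconst QS a) Λ x u v +
       v * HpenV QS E.η (Aconst QS a) Λ x u v| ≤
        C₁ * Aconst QS a * (u ^ 2 + v ^ 2) :=
  stmt5_general s p hp QS Λ cη hcη
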